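/- Let $u \in C^0(\bar{B})$ be positive on the closure of the unit ball $B \subset \mathbb{R}^n$ ($n \ge 3$) and let $a = 2/(n-2)$ (more generally any $a>0$). Then there exists $x \in B$ with $\sigma = (1-|x|)/2 \le 1/2$ such that $2^a u(x) \ge \max_{\bar B_\sigma(x)} u$ and $(2\sigma)^a u(x) \ge u(0)$. -/

import Mathlib

/-!
Maximize `(1 - ‖x‖) ^ a * u x` over the closed unit ball. The weight vanishes on the unit sphere
and equals `1` at the origin, so a maximizer `x` lies in the open ball and the weighted value there
dominates `u 0`. On the ball of radius `σ = (1 - ‖x‖) / 2` around `x` the weight is at least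
`σ ^ a`, which is `2 ^ (-a)` times the weight at `x`; maximality then gives `u ≤ 2 ^ a * u x`.
-/

open Metric Real

variable {E : Type*} [NormedAddCommGroup E]

noncomputable def powerWeighted (a : ℝ) (u : E → ℝ) (x : E) : ℝ := (1 - ‖x‖) ^ a * u x

lemma continuousOn_powerWeighted {a : ℝ} (ha : 0 < a) {u : E → ℝ} {s : Set E}
    (hu : ContinuousOn u s) : ContinuousOn (powerWeighted a u) s :=
  ((continuous_const.sub continuous_norm).continuousOn.rpow_const
    fun _ _ => Or.inr ha.le).mul hu

lemma half_one_sub_norm_le_one_sub_norm {x y : E} (hy : y ∈ closedBall x ((1 - ‖x‖) / 2)) :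
    (1 - ‖x‖) / 2 ≤ 1 - ‖y‖ := by
  linarith [norm_le_of_mem_closedBall hy]

lemma exists_mem_ball_isMaxOn_powerWeighted [ProperSpace E] {a : ℝ} (ha : 0 < a) {u : E → ℝ}
    (hu_cont : ContinuousOn u (closedBall 0 1)) (hu0 : 0 < u 0) :
    ∃ x ∈ ball (0 : E) 1, IsMaxOn (powerWeighted a u) (closedBall 0 1) x := by
  have h0 : (0 : E) ∈ closedBall 0 1 := mem_closedBall_self zero_le_one
  obtain ⟨x, hx, hmax⟩ := (isCompact_closedBall (0 : E) 1).exists_isMaxOn ⟨0, h0⟩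
    (continuousOn_powerWeighted ha hu_cont)
  refine ⟨x, ?_, hmax⟩
  rw [mem_closedBall_zero_iff] at hx
  rw [mem_ball_zero_iff]
  refine hx.lt_of_ne fun hx1 => ?_
  have h := isMaxOn_iff.mp hmax 0 h0
  simp only [powerWeighted, hx1, sub_self, zero_rpow ha.ne', zero_mul,
    norm_zero, sub_zero, one_rpow, one_mul] at h
  exact h.not_gt hu0

lemma le_two_rpow_mul_of_isMaxOn_powerWeighted {a : ℝ} (ha : 0 ≤ a) {u : E → ℝ}
    (hu_nonneg : ∀ y ∈ closedBall (0 : E) 1, 0 ≤ u y) {x : E} (hx : ‖x‖ < 1)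
    (hmax : IsMaxOn (powerWeighted a u) (closedBall 0 1) x) :
    ∀ y ∈ closedBall x ((1 - ‖x‖) / 2), u y ≤ 2 ^ a * u x := by
  intro y hy
  set σ := (1 - ‖x‖) / 2
  have hσ : 0 < σ := by positivity
  have hσy : σ ≤ 1 - ‖y‖ := half_one_sub_norm_le_one_sub_norm hy
  have hyB : y ∈ closedBall (0 : E) 1 := by
    rw [mem_closedBall_zero_iff]
    linarith
  refine le_of_mul_le_mul_left ?_ (rpow_pos_of_pos hσ a)
  calc σ ^ a * u y ≤ (1 - ‖y‖) ^ a * u y :=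
        mul_le_mul_of_nonneg_right (rpow_le_rpow hσ.le hσy ha) (hu_nonneg y hyB)
    _ ≤ (1 - ‖x‖) ^ a * u x := isMaxOn_iff.mp hmax y hyB
    _ = σ ^ a * (2 ^ a * u x) := by
        rw [← mul_assoc, ← mul_rpow hσ.le zero_le_two]
        congr 2
        ring

theorem schoen_selection_power_general
    (n : ℕ) (a : ℝ) (ha : 0 < a)
    (u : EuclideanSpace ℝ (Fin n) → ℝ)
    (hu_cont : ContinuousOn u (closedBall (0 : EuclideanSpace ℝ (Fin n)) 1))
    (hu_pos : ∀ y ∈ closedBall (0 : EuclideanSpace ℝ (Fin n)) 1, 0 < u y) :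
    ∃ x ∈ ball (0 : EuclideanSpace ℝ (Fin n)) 1,
      (1 - ‖x‖) / 2 ≤ 1 / 2 ∧
      (∀ y ∈ closedBall x ((1 - ‖x‖) / 2),
        u y ≤ (2 : ℝ) ^ a * u x) ∧
      u 0 ≤ (2 * ((1 - ‖x‖) / 2)) ^ a * u x := by
  have h0 : (0 : EuclideanSpace ℝ (Fin n)) ∈ closedBall 0 1 := mem_closedBall_self zero_le_one
  obtain ⟨x, hx, hmax⟩ := exists_mem_ball_isMaxOn_powerWeighted ha hu_cont (hu_pos 0 h0)
  rw [mem_ball_zero_iff] at hx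
  refine ⟨x, mem_ball_zero_iff.mpr hx, by linarith [norm_nonneg x],
    le_two_rpow_mul_of_isMaxOn_powerWeighted ha.le (fun y hy => (hu_pos y hy).le) hx hmax, ?_⟩
  have h := isMaxOn_iff.mp hmax 0 h0
  simp only [powerWeighted, norm_zero, sub_zero, one_rpow, one_mul] at h
  rwa [mul_div_cancel₀ _ two_ne_zero]

/-- Special case of the Schoen selection lemma with weight `φ(r) = (1-r)^a`,
`a = 2/(n-2)` (or any `a > 0`): there is `x` in the open unit ball with
`σ = (1-|x|)/2 ≤ 1/2` such that `2^a u(x) ≥ max_{closedBall x σ} u` and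
`(2σ)^a u(x) ≥ u(0)`. -/
theorem schoen_selection_power
    (n : ℕ) (hn : 3 ≤ n) (a : ℝ) (ha : 0 < a)
    (u : EuclideanSpace ℝ (Fin n) → ℝ)
    (hu_cont : ContinuousOn u (closedBall (0 : EuclideanSpace ℝ (Fin n)) 1))
    (hu_pos : ∀ y ∈ closedBall (0 : EuclideanSpace ℝ (Fin n)) 1, 0 < u y) :
    ∃ x ∈ ball (0 : EuclideanSpace ℝ (Fin n)) 1,
      (1 - ‖x‖) / 2 ≤ 1 / 2 ∧
      (∀ y ∈ closedBall x ((1 - ‖x‖) / 2),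
        u y ≤ (2 : ℝ) ^ a * u x) ∧
      u 0 ≤ (2 * ((1 - ‖x‖) / 2)) ^ a * u x :=
  schoen_selection_power_general n a ha u hu_cont hu_pos
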